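/- Consider the knapsack problem with arbitrary fixed profits p_1,...,p_n ∈ ℝ≥0 where each weight w_i is drawn uniformly at random from an arbitrary interval A_i ⊆ [0,1] of length 1/φ, independently of the other weights. Then the expected number of Pareto-optimal solutions in {0,1}^n is at most n²φ + 1. -/

import Mathlib

open MeasureTheory
open scoped ProbabilityTheory ENNReal

def dotB {n : ℕ} (c : Fin n → ℝ) (x : Fin n → Bool) : ℝ :=
  ∑ i, c i * (if x i then 1 else 0)

def dominates {n : ℕ} (p w : Fin n → ℝ) (y x : Fin n → Bool) : Prop :=
  dotB p x ≤ dotB p y ∧ dotB w y ≤ dotB w x ∧ (dotB p x < dotB p y ∨ dotB w y < dotB w x)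

/-- The number of Pareto-optimal solutions, counting distinct (profit, weight) values. -/
noncomputable def paretoCount {n : ℕ} (p w : Fin n → ℝ) : ℕ := by
  classical
  exact ((Finset.univ.filter fun x : Fin n → Bool =>
      ∀ y : Fin n → Bool, ¬ dominates p w y x).image
    (fun x => (dotB p x, dotB w x))).card

/-!
Pareto-optimal solutions of equal weight have equal profit, so the count is the number of
distinct Pareto-optimal weights, all in `[0, n]`. Cut `(0, n]` into `m` cells `(t, t + ε]` with
`ε = n / m`: for large `m` distinct positive weights occupy distinct cells, so the count is at
most `1 +` the number of cells hit, and Fatou's lemma lets `m → ∞`.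

A cell `(t, t + ε]` is hit only if, for some item `i`, the lightest solution containing `i` that
is more profitable than every solution of weight `≤ t` avoiding `i` has weight in `(t, t + ε]`:
take `i` in the Pareto-optimal solution but not in the most profitable solution of weight `≤ t`.
With the other weights fixed, that lightest solution does not depend on `w i` and its weight is
`w i` plus a constant, so `w i` must fall in an interval of length `ε`, which has probability at
most `φ ε`. Summing over `n` items and `m` cells gives `1 + m · n φ ε = n² φ + 1`.
-/

open Set Filter Function

lemma mem_Ioc_natCeil_sub_one_mul {s h : ℝ} (hs : 0 < s) (hh : 0 < h) :
    s ∈ Ioc (((⌈s / h⌉₊ - 1 : ℕ) : ℝ) * h) (((⌈s / h⌉₊ - 1 : ℕ) : ℝ) * h + h) := by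
  have hN : 1 ≤ ⌈s / h⌉₊ := Nat.one_le_iff_ne_zero.2 (Nat.ceil_pos.2 (div_pos hs hh)).ne'
  have hlt := Nat.ceil_lt_add_one (div_pos hs hh).le
  rw [Nat.cast_sub hN, Nat.cast_one]
  constructor
  · rw [← lt_div_iff₀ hh]
    linarith
  · rw [sub_one_mul, sub_add_cancel, ← div_le_iff₀ hh]
    exact Nat.le_ceil _

lemma eventually_card_le_card_filter_Ioc {S : Finset ℝ} {L : ℝ} (hS : ∀ s ∈ S, s ∈ Ioc 0 L) :
    ∀ᶠ m : ℕ in atTop, S.card ≤ ((Finset.range m).filter fun k : ℕ =>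
      ∃ s ∈ S, s ∈ Ioc (k * (L / m)) (k * (L / m) + L / m)).card := by
  rcases S.eq_empty_or_nonempty with rfl | ⟨s₀, hs₀⟩
  · simp
  have hL : 0 < L := (hS s₀ hs₀).1.trans_le (hS s₀ hs₀).2
  have hfine : ∀ᶠ m : ℕ in atTop, ∀ s ∈ S, ∀ s' ∈ S, s ≠ s' → L / m < |s - s'| := by
    simp only [eventually_all_finset]
    intro s _ s' _
    by_cases hss : s = s'
    · simp [hss]
    exact ((tendsto_const_div_atTop_nhds_zero_nat L).eventually
      (gt_mem_nhds (abs_pos.2 (sub_ne_zero.2 hss)))).mono fun m hm _ => hm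
  filter_upwards [hfine, eventually_gt_atTop 0] with m hm hm0
  have hh : 0 < L / m := div_pos hL (Nat.cast_pos.2 hm0)
  set k : ℝ → ℕ := fun s => ⌈s / (L / m)⌉₊ - 1
  have hcell : ∀ s ∈ S, s ∈ Ioc (k s * (L / m)) (k s * (L / m) + L / m) :=
    fun s hs => mem_Ioc_natCeil_sub_one_mul (hS s hs).1 hh
  refine Finset.card_le_card_of_injOn k (fun s hs => ?_) fun s hs s' hs' hk => ?_
  · refine Finset.mem_filter.2 ⟨Finset.mem_range.2 ?_, s, hs, hcell s hs⟩
    have : ⌈s / (L / m)⌉₊ ≤ m := Nat.ceil_le.2 <| by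
      rw [div_le_iff₀ hh, mul_div_cancel₀ _ (Nat.cast_pos.2 hm0).ne']
      exact (hS s hs).2
    show ⌈s / (L / m)⌉₊ - 1 < m
    omega
  · by_contra hss
    have h₁ := hcell s hs
    have h₂ := hcell s' hs'
    rw [hk] at h₁
    exact (hm s hs s' hs' hss).not_gt
      (abs_sub_lt_iff.2 ⟨by linarith [h₁.2, h₂.1], by linarith [h₁.1, h₂.2]⟩)

lemma pi_le_of_forall_slice_le {ι : Type*} [Fintype ι] [DecidableEq ι] {X : ι → Type*}
    [∀ i, MeasurableSpace (X i)] {μ : ∀ i, Measure (X i)} [∀ i, IsProbabilityMeasure (μ i)]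
    {S : Set (∀ i, X i)} (hS : MeasurableSet S) (i : ι) {c : ℝ≥0∞}
    (hc : ∀ x, μ i {y | update x i y ∈ S} ≤ c) : Measure.pi μ S ≤ c := by
  have hslice : ∀ x, ∫⁻ y, S.indicator 1 (update x i y) ∂μ i = μ i {y | update x i y ∈ S} :=
    fun x => lintegral_indicator_one (measurable_update x hS)
  calc Measure.pi μ S = ∫⁻ x, S.indicator 1 x ∂Measure.pi μ := (lintegral_indicator_one hS).symm
    _ ≤ ∫⁻ _, c ∂Measure.pi μ :=
        lintegral_le_of_lmarginal_le {i} (measurable_one.indicator hS) measurable_const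
          fun x => by simpa [lmarginal_singleton, hslice] using hc x
    _ = c := by simp

open ProbabilityTheory in
lemma cond_volume_Icc_Ioc_le {ℓ : ℝ} (hℓ : 0 < ℓ) (a c ε : ℝ) :
    volume[|Icc a (a + ℓ)] (Ioc c (c + ε)) ≤ ENNReal.ofReal (ε / ℓ) := by
  rw [cond_apply measurableSet_Icc, Real.volume_Icc, add_sub_cancel_left,
    ENNReal.ofReal_div_of_pos hℓ, ENNReal.div_eq_inv_mul]
  gcongr
  exact (measure_mono inter_subset_right).trans_eq (by rw [Real.volume_Ioc, add_sub_cancel_left])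

section Knapsack

variable {n : ℕ}

def IsParetoOptimal (p w : Fin n → ℝ) (x : Fin n → Bool) : Prop :=
  ∀ y, ¬ dominates p w y x

def BeatsWithout (p w : Fin n → ℝ) (i : Fin n) (t : ℝ) (x : Fin n → Bool) : Prop :=
  ∀ y, y i = false → dotB w y ≤ t → dotB p y < dotB p x

def IsLightestBeater (p w : Fin n → ℝ) (i : Fin n) (t : ℝ) (x : Fin n → Bool) : Prop :=
  x i = true ∧ BeatsWithout p w i t x ∧
    ∀ z, z i = true → BeatsWithout p w i t z → dotB w x ≤ dotB w z

def paretoWeightIoc (p : Fin n → ℝ) (t ε : ℝ) : Set (Fin n → ℝ) :=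
  {w | ∃ x, IsParetoOptimal p w x ∧ dotB w x ∈ Ioc t (t + ε)}

def lightestBeaterIoc (p : Fin n → ℝ) (i : Fin n) (t ε : ℝ) : Set (Fin n → ℝ) :=
  {w | ∃ x, IsLightestBeater p w i t x ∧ dotB w x ∈ Ioc t (t + ε)}

lemma dotB_nonneg {w : Fin n → ℝ} (hw : ∀ j, 0 ≤ w j) (x : Fin n → Bool) : 0 ≤ dotB w x :=
  Finset.sum_nonneg fun j _ => mul_nonneg (hw j) (by positivity)

lemma dotB_le_card {w : Fin n → ℝ} (hw : ∀ j, w j ≤ 1) (x : Fin n → Bool) : dotB w x ≤ n :=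
  calc dotB w x ≤ ∑ _j : Fin n, (1 : ℝ) :=
        Finset.sum_le_sum fun j _ => by split_ifs <;> simp [hw j]
    _ = n := by simp

lemma dotB_mono {w : Fin n → ℝ} (hw : ∀ j, 0 ≤ w j) {x y : Fin n → Bool}
    (hxy : ∀ j, x j = true → y j = true) : dotB w x ≤ dotB w y := by
  refine Finset.sum_le_sum fun j _ => mul_le_mul_of_nonneg_left ?_ (hw j)
  by_cases hx : x j <;> by_cases hy : y j <;> simp_all

lemma dotB_update (w : Fin n → ℝ) (i : Fin n) (u : ℝ) (x : Fin n → Bool) :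
    dotB (update w i u) x = dotB (update w i 0) x + if x i then u else 0 := by
  have hrest : ∀ j ∈ ({i}ᶜ : Finset (Fin n)),
      update w i u j * (if x j then 1 else 0) = update w i 0 j * (if x j then 1 else 0) :=
    fun j hj => by rw [update_of_ne (by simpa using hj), update_of_ne (by simpa using hj)]
  simp only [dotB, Fintype.sum_eq_add_sum_compl i, Finset.sum_congr rfl hrest, update_self]
  split_ifs <;> ring

lemma dotB_update_of_false (w : Fin n → ℝ) {i : Fin n} (u : ℝ) {y : Fin n → Bool}
    (hy : y i = false) : dotB (update w i u) y = dotB w y := by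
  have hw := dotB_update w i (w i) y
  rw [update_eq_self] at hw
  simp [dotB_update w i u y, hw, hy]

lemma dotB_update_of_true (w : Fin n → ℝ) {i : Fin n} (u : ℝ) {x : Fin n → Bool}
    (hx : x i = true) : dotB (update w i u) x = dotB (update w i 0) x + u := by
  rw [dotB_update, hx]
  simp

@[fun_prop]
lemma measurable_dotB (x : Fin n → Bool) : Measurable fun w : Fin n → ℝ => dotB w x := by
  unfold dotB
  fun_prop

lemma measurableSet_paretoWeightIoc (p : Fin n → ℝ) (t ε : ℝ) :
    MeasurableSet (paretoWeightIoc p t ε) := by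
  simp only [paretoWeightIoc, IsParetoOptimal, dominates, mem_Ioc, measurableSet_setOfPred]
  fun_prop

lemma measurableSet_lightestBeaterIoc (p : Fin n → ℝ) (i : Fin n) (t ε : ℝ) :
    MeasurableSet (lightestBeaterIoc p i t ε) := by
  simp only [lightestBeaterIoc, IsLightestBeater, BeatsWithout, mem_Ioc, measurableSet_setOfPred]
  fun_prop

lemma IsParetoOptimal.dotB_eq_of_dotB_eq {p w : Fin n → ℝ} {x y : Fin n → Bool}
    (hx : IsParetoOptimal p w x) (hy : IsParetoOptimal p w y) (h : dotB w x = dotB w y) :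
    dotB p x = dotB p y := by
  by_contra hne
  rcases lt_or_gt_of_ne hne with hlt | hlt
  · exact hx y ⟨hlt.le, h.ge, Or.inl hlt⟩
  · exact hy x ⟨hlt.le, h.le, Or.inl hlt⟩

lemma beatsWithout_update_iff {p w : Fin n → ℝ} {i : Fin n} {t u : ℝ} {x : Fin n → Bool} :
    BeatsWithout p (update w i u) i t x ↔ BeatsWithout p w i t x :=
  forall_congr' fun y => imp_congr_right fun hy => by rw [dotB_update_of_false w u hy]

lemma exists_isLightestBeater {p w : Fin n → ℝ} {i : Fin n} {t : ℝ} {x : Fin n → Bool}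
    (hxi : x i = true) (hx : BeatsWithout p w i t x) :
    ∃ z, IsLightestBeater p w i t z ∧ dotB w z ≤ dotB w x := by
  classical
  obtain ⟨z, hz, hmin⟩ := (Finset.univ.filter fun z => z i = true ∧ BeatsWithout p w i t z)
    |>.exists_min_image (dotB w) ⟨x, by simp [hxi, hx]⟩
  simp only [Finset.mem_filter, Finset.mem_univ, true_and] at hz hmin
  exact ⟨z, ⟨hz.1, hz.2, fun z' h₁ h₂ => hmin z' ⟨h₁, h₂⟩⟩, hmin x ⟨hxi, hx⟩⟩

lemma paretoWeightIoc_subset_iUnion {p w : Fin n → ℝ} (hw : ∀ j, 0 ≤ w j) {t ε : ℝ}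
    (ht : 0 ≤ t) (h : w ∈ paretoWeightIoc p t ε) : w ∈ ⋃ i, lightestBeaterIoc p i t ε := by
  classical
  obtain ⟨x, hxpar, hxt, hxε⟩ := h
  obtain ⟨xs, hxs, hxsmax⟩ := (Finset.univ.filter fun y => dotB w y ≤ t).exists_max_image
    (dotB p) ⟨fun _ => false, by simp [dotB, ht]⟩
  simp only [Finset.mem_filter, Finset.mem_univ, true_and] at hxs hxsmax
  have hprofit : dotB p xs < dotB p x := by
    by_contra! h
    exact hxpar xs ⟨h, hxs.trans hxt.le, Or.inr (hxs.trans_lt hxt)⟩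
  obtain ⟨i, hxi, hxsi⟩ : ∃ i, x i = true ∧ xs i = false := by
    by_contra! h
    exact ((dotB_mono hw fun j hj => by simpa using h j hj).trans hxs).not_gt hxt
  have hbeats : BeatsWithout p w i t x := fun y _ hy => (hxsmax y hy).trans_lt hprofit
  obtain ⟨z, hz, hzx⟩ := exists_isLightestBeater hxi hbeats
  refine mem_iUnion.2 ⟨i, z, hz, ?_, hzx.trans hxε⟩
  by_contra! hzt
  exact (hxsmax z hzt).not_gt (hz.2.1 xs hxsi hxs)

lemma IsLightestBeater.dotB_update_zero_eq {p w : Fin n → ℝ} {i : Fin n} {t u u' : ℝ}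
    {x x' : Fin n → Bool} (hx : IsLightestBeater p (update w i u) i t x)
    (hx' : IsLightestBeater p (update w i u') i t x') :
    dotB (update w i 0) x = dotB (update w i 0) x' := by
  have h := hx.2.2 x' hx'.1 (beatsWithout_update_iff.2 (beatsWithout_update_iff.1 hx'.2.1))
  have h' := hx'.2.2 x hx.1 (beatsWithout_update_iff.2 (beatsWithout_update_iff.1 hx.2.1))
  rw [dotB_update_of_true w u hx.1, dotB_update_of_true w u hx'.1] at h
  rw [dotB_update_of_true w u' hx.1, dotB_update_of_true w u' hx'.1] at h'
  linarith

lemma exists_slice_lightestBeaterIoc_subset (p w : Fin n → ℝ) (i : Fin n) (t ε : ℝ) :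
    ∃ c, {u | update w i u ∈ lightestBeaterIoc p i t ε} ⊆ Ioc c (c + ε) := by
  rcases eq_empty_or_nonempty {u | update w i u ∈ lightestBeaterIoc p i t ε}
    with he | ⟨u₀, x₀, hx₀, -⟩
  · exact ⟨0, he.subset.trans (empty_subset _)⟩
  refine ⟨t - dotB (update w i 0) x₀, fun u ⟨x, hx, hxt, hxε⟩ => ?_⟩
  rw [dotB_update_of_true w u hx.1, hx.dotB_update_zero_eq hx₀] at hxt hxε
  constructor <;> linarith

open Classical in
lemma paretoCount_eq_card_image_dotB (p w : Fin n → ℝ) :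
    paretoCount p w = ((Finset.univ.filter (IsParetoOptimal p w)).image (dotB w)).card := by
  set F := Finset.univ.filter (IsParetoOptimal p w)
  have hsnd : (F.image fun x => (dotB p x, dotB w x)).image Prod.snd = F.image (dotB w) := by
    rw [Finset.image_image]
    rfl
  have hinj : InjOn Prod.snd (F.image fun x => (dotB p x, dotB w x) : Set (ℝ × ℝ)) := by
    rintro _ hq _ hq' hsnd
    simp only [Finset.coe_image, Finset.coe_filter, Finset.mem_univ, true_and, mem_image,
      F] at hq hq'
    obtain ⟨x, hx, rfl⟩ := hq
    obtain ⟨y, hy, rfl⟩ := hq'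
    exact Prod.ext (hx.dotB_eq_of_dotB_eq hy hsnd) hsnd
  rw [← hsnd, Finset.card_image_of_injOn hinj, paretoCount]
  congr 2
  ext x
  simp [F, IsParetoOptimal]

open Classical in
lemma eventually_paretoCount_le {p w : Fin n → ℝ} (hw : ∀ j, w j ∈ Icc 0 1) :
    ∀ᶠ m : ℕ in atTop, paretoCount p w ≤ 1 + ((Finset.range m).filter fun k : ℕ =>
      w ∈ paretoWeightIoc p (k * (n / m)) (n / m)).card := by
  set S := (Finset.univ.filter (IsParetoOptimal p w)).image (dotB w)
  have hS : ∀ s ∈ S, s ∈ Icc 0 (n : ℝ) ∧ ∃ x, IsParetoOptimal p w x ∧ dotB w x = s := by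
    intro s hs
    obtain ⟨x, hx, rfl⟩ := Finset.mem_image.1 hs
    exact ⟨⟨dotB_nonneg (fun j => (hw j).1) x, dotB_le_card (fun j => (hw j).2) x⟩, x,
      (Finset.mem_filter.1 hx).2, rfl⟩
  have hcard : S.card ≤ 1 + (S.filter (0 < ·)).card := by
    refine (Finset.card_le_card fun s hs => ?_).trans (Finset.card_insert_le 0 _)
      |>.trans_eq (add_comm _ _)
    rcases (hS s hs).1.1.eq_or_lt with h | h
    · exact h ▸ Finset.mem_insert_self _ _
    · exact Finset.mem_insert_of_mem (Finset.mem_filter.2 ⟨hs, h⟩)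
  filter_upwards [eventually_card_le_card_filter_Ioc (S := S.filter (0 < ·)) (L := n)
    fun s hs => ⟨(Finset.mem_filter.1 hs).2, (hS s (Finset.mem_filter.1 hs).1).1.2⟩] with m hm
  rw [paretoCount_eq_card_image_dotB]
  refine hcard.trans (Nat.add_le_add_left (hm.trans (Finset.card_le_card ?_)) 1)
  refine Finset.monotone_filter_right _ fun k _ ⟨s, hs, hsk⟩ => ?_
  obtain ⟨x, hx, rfl⟩ := (hS s (Finset.mem_filter.1 hs).1).2
  exact ⟨x, hx, hsk⟩

lemma pi_paretoWeightIoc_le (p : Fin n → ℝ) {ν : Fin n → Measure ℝ}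
    [∀ i, IsProbabilityMeasure (ν i)] (hν : ∀ i, ∀ᵐ u ∂ν i, 0 ≤ u) {t ε : ℝ} {δ : ℝ≥0∞}
    (hδ : ∀ i c, ν i (Ioc c (c + ε)) ≤ δ) (ht : 0 ≤ t) :
    Measure.pi ν (paretoWeightIoc p t ε) ≤ n * δ := by
  have hnonneg : ∀ᵐ w ∂Measure.pi ν, ∀ j, 0 ≤ w j :=
    ae_all_iff.2 fun j => Measure.tendsto_eval_ae_ae.eventually (hν j)
  calc Measure.pi ν (paretoWeightIoc p t ε)
      ≤ Measure.pi ν (⋃ i, lightestBeaterIoc p i t ε) :=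
        measure_mono_ae (hnonneg.mono fun w hw h => paretoWeightIoc_subset_iUnion hw ht h)
    _ ≤ ∑ i, Measure.pi ν (lightestBeaterIoc p i t ε) := measure_iUnion_fintype_le _ _
    _ ≤ ∑ _i : Fin n, δ := Finset.sum_le_sum fun i _ => by
        refine pi_le_of_forall_slice_le (measurableSet_lightestBeaterIoc p i t ε) i fun w => ?_
        obtain ⟨c, hc⟩ := exists_slice_lightestBeaterIoc_subset p w i t ε
        exact (measure_mono hc).trans (hδ i c)
    _ = n * δ := by simp

lemma lintegral_sum_indicator_paretoWeightIoc_le (p : Fin n → ℝ) {μ : Measure (Fin n → ℝ)}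
    {C : ℝ} (hwin : ∀ t ε, 0 ≤ t → 0 ≤ ε → μ (paretoWeightIoc p t ε) ≤ ENNReal.ofReal (C * ε))
    (m : ℕ) :
    ∫⁻ w, ∑ k ∈ Finset.range m, (paretoWeightIoc p (k * (n / m)) (n / m)).indicator 1 w ∂μ
      ≤ ENNReal.ofReal (n * C) := by
  rw [lintegral_finsetSum _ fun k _ =>
    measurable_one.indicator (measurableSet_paretoWeightIoc p _ _)]
  simp_rw [lintegral_indicator_one (measurableSet_paretoWeightIoc p _ _)]
  calc ∑ k ∈ Finset.range m, μ (paretoWeightIoc p (k * (n / m)) (n / m))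
      ≤ ∑ _k ∈ Finset.range m, ENNReal.ofReal (C * (n / m)) :=
        Finset.sum_le_sum fun k _ => hwin _ _ (by positivity) (by positivity)
    _ ≤ ENNReal.ofReal (n * C) := by
        rcases m.eq_zero_or_pos with rfl | hm
        · simp
        rw [Finset.sum_const, Finset.card_range, ← ENNReal.ofReal_nsmul, nsmul_eq_mul]
        refine le_of_eq (congrArg ENNReal.ofReal ?_)
        field_simp

open Classical in
lemma lintegral_paretoCount_le {Ω : Type*} [MeasurableSpace Ω] {P : Measure Ω}
    [IsProbabilityMeasure P] (p : Fin n → ℝ) {V : Ω → Fin n → ℝ} (hV : AEMeasurable V P)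
    (hbox : ∀ᵐ ω ∂P, ∀ j, V ω j ∈ Icc 0 1) {C : ℝ}
    (hwin : ∀ t ε, 0 ≤ t → 0 ≤ ε → P.map V (paretoWeightIoc p t ε) ≤ ENNReal.ofReal (C * ε)) :
    ∫⁻ ω, (paretoCount p (V ω) : ℝ≥0∞) ∂P ≤ 1 + ENNReal.ofReal (n * C) := by
  set S : ℕ → (Fin n → ℝ) → ℝ≥0∞ := fun m w =>
    ∑ k ∈ Finset.range m, (paretoWeightIoc p (k * (n / m)) (n / m)).indicator 1 w
  have hS : ∀ m, Measurable (S m) := fun m => Finset.measurable_sum _ fun k _ =>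
    measurable_one.indicator (measurableSet_paretoWeightIoc p _ _)
  set G : ℕ → (Fin n → ℝ) → ℝ≥0∞ := fun m w => 1 + S m w
  have hG : ∀ m, Measurable (G m) := fun m => (hS m).const_add 1
  have hcount : ∀ᵐ ω ∂P, (paretoCount p (V ω) : ℝ≥0∞) ≤ liminf (fun m => G m (V ω)) atTop := by
    refine hbox.mono fun ω hω => le_liminf_of_le (by isBoundedDefault) ?_
    filter_upwards [eventually_paretoCount_le hω] with m hm
    have := (Nat.cast_le (α := ℝ≥0∞)).2 hm
    rw [Nat.cast_add, Nat.cast_one, Finset.natCast_card_filter] at this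
    convert this using 3
    exact indicator_apply ..
  have hint : ∀ m, ∫⁻ ω, G m (V ω) ∂P ≤ 1 + ENNReal.ofReal (n * C) := fun m => by
    have := Measure.isProbabilityMeasure_map (μ := P) hV
    rw [← lintegral_map' (hG m).aemeasurable hV, lintegral_add_left measurable_const,
      lintegral_const, measure_univ, mul_one]
    exact add_le_add le_rfl (lintegral_sum_indicator_paretoWeightIoc_le p hwin m)
  calc ∫⁻ ω, (paretoCount p (V ω) : ℝ≥0∞) ∂P
      ≤ ∫⁻ ω, liminf (fun m => G m (V ω)) atTop ∂P := lintegral_mono_ae hcount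
    _ ≤ liminf (fun m => ∫⁻ ω, G m (V ω) ∂P) atTop :=
        lintegral_liminf_le' fun m => (hG m).comp_aemeasurable hV
    _ ≤ 1 + ENNReal.ofReal (n * C) :=
        (liminf_le_liminf (Eventually.of_forall hint)).trans (liminf_const _).le

end Knapsack

theorem expected_pareto_count_le_general {Ω : Type*} [MeasureSpace Ω]
    [IsProbabilityMeasure (ℙ : Measure Ω)] {n : ℕ}
    (p : Fin n → ℝ) (φ : ℝ) (hφ : 1 ≤ φ)
    (a : Fin n → ℝ) (ha : ∀ i, 0 ≤ a i ∧ a i + 1 / φ ≤ 1)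
    (W : Fin n → Ω → ℝ)
    (hindep : ProbabilityTheory.iIndepFun W ℙ)
    (hunif : ∀ i, pdf.IsUniform (W i) (Set.Icc (a i) (a i + 1 / φ)) ℙ) :
    ∫⁻ ω, (paretoCount p (fun i => W i ω) : ℝ≥0∞) ∂ℙ
      ≤ ENNReal.ofReal ((n : ℝ) ^ 2 * φ + 1) := by
  have hφ0 : 0 < φ := one_pos.trans_le hφ
  have hW : ∀ i, AEMeasurable (W i) ℙ := fun i =>
    (hunif i).aemeasurable (by simp [hφ0]) (by simp)
  have hsupp : ∀ i, ∀ᵐ u ∂(ℙ : Measure Ω).map (W i), u ∈ Icc (0 : ℝ) 1 := fun i => by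
    rw [hunif i]
    exact (ProbabilityTheory.ae_cond_mem measurableSet_Icc).mono fun u hu =>
      ⟨(ha i).1.trans hu.1, hu.2.trans (ha i).2⟩
  have hwin : ∀ t ε, 0 ≤ t → 0 ≤ ε → (ℙ : Measure Ω).map (fun ω i => W i ω)
      (paretoWeightIoc p t ε) ≤ ENNReal.ofReal (n * φ * ε) := fun t ε ht _ => by
    have := fun i => Measure.isProbabilityMeasure_map (μ := (ℙ : Measure Ω)) (hW i)
    rw [hindep.map_fun_eq_pi_map hW]
    refine (pi_paretoWeightIoc_le p (δ := ENNReal.ofReal (ε / (1 / φ)))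
      (fun i => (hsupp i).mono fun u hu => hu.1) (fun i c => ?_) ht).trans_eq ?_
    · rw [hunif i]
      exact cond_volume_Icc_Ioc_le (by positivity) ..
    · rw [← ENNReal.ofReal_natCast, ← ENNReal.ofReal_mul (by positivity)]
      congr 1
      field_simp
  calc ∫⁻ ω, (paretoCount p (fun i => W i ω) : ℝ≥0∞) ∂ℙ
      ≤ 1 + ENNReal.ofReal (n * (n * φ)) :=
        lintegral_paretoCount_le p (aemeasurable_pi_lambda _ hW)
          (ae_all_iff.2 fun j => ae_of_ae_map (hW j) (hsupp j)) hwin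
    _ = ENNReal.ofReal ((n : ℝ) ^ 2 * φ + 1) := by
        rw [ENNReal.ofReal_add (by positivity) zero_le_one, ENNReal.ofReal_one, add_comm]
        congr 2
        ring

/-- Knapsack with arbitrary nonnegative profits and weights drawn independently and
uniformly from intervals `A_i ⊆ [0,1]` of length `1/φ`: the expected number of
Pareto-optimal solutions is at most `n²·φ + 1`. -/
theorem expected_pareto_count_le {Ω : Type*} [MeasureSpace Ω]
    [IsProbabilityMeasure (ℙ : Measure Ω)] {n : ℕ}
    (p : Fin n → ℝ) (hp : ∀ i, 0 ≤ p i) (φ : ℝ) (hφ : 1 ≤ φ)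
    (a : Fin n → ℝ) (ha : ∀ i, 0 ≤ a i ∧ a i + 1 / φ ≤ 1)
    (W : Fin n → Ω → ℝ)
    (hindep : ProbabilityTheory.iIndepFun W ℙ)
    (hunif : ∀ i, pdf.IsUniform (W i) (Set.Icc (a i) (a i + 1 / φ)) ℙ) :
    ∫⁻ ω, (paretoCount p (fun i => W i ω) : ℝ≥0∞) ∂ℙ
      ≤ ENNReal.ofReal ((n : ℝ) ^ 2 * φ + 1) :=
  expected_pareto_count_le_general p φ hφ a ha W hindep hunif
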